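/- Let k, n be positive integers with p·n ≤ k ≤ n and 0 < p < 1 with q = 1 - p, and set f = k/n. Then 1 ≤ L̄(n,k,p) ≤ B̄_{n,k}(p)/b_{n,k}(p) ≤ Ū(n,k,p) < 2·L̄(n,k,p), where all inequalities are strict when k ≤ n - 1. If in addition p < f < 1, then 1 < L̄(n,k,p) < B̄_{n,k}(p)/b_{n,k}(p) < Ū(n,k,p) ≤ V̄(n,k,p,0) < f·q/(f-p). -/

import Mathlib

open Real

/-- Binomial probability `b_{n,k}(p)`. -/
noncomputable def b (n k : ℕ) (p : ℝ) : ℝ :=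
  (n.choose k : ℝ) * p ^ k * (1 - p) ^ (n - k)

/-- Upper tail probability `B̄_{n,k}(p) = ∑_{j=k}^n C(n,j) p^j (1-p)^(n-j)`. -/
noncomputable def Bbar (n k : ℕ) (p : ℝ) : ℝ :=
  ∑ j ∈ Finset.Icc k n, (n.choose j : ℝ) * p ^ j * (1 - p) ^ (n - j)

noncomputable def V (n k p a : ℝ) : ℝ :=
  a + p * (n - k + a + 1) / (p * n + p - k + a)

noncomputable def U (n k p : ℝ) : ℝ := ⨅ a : ℕ, V n k p (a : ℝ)

/-- `L̄(n,k,p) = (pn - k + 1 + √((pn - k + 1)² + 4qk))/2`. -/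
noncomputable def Lbar (n k p : ℝ) : ℝ :=
  (p * n - k + 1 + Real.sqrt ((p * n - k + 1) ^ 2 + 4 * (1 - p) * k)) / 2

/-- `V̄(n,k,p,a) = V(n, n-k, 1-p, a)`. -/
noncomputable def Vbar (n k p a : ℝ) : ℝ := V n (n - k) (1 - p) a

/-- `Ū(n,k,p) = U(n, n-k, 1-p)`. -/
noncomputable def Ubar (n k p : ℝ) : ℝ := U n (n - k) (1 - p)

/-!
Write `S = B̄_{n,k}(p) / b_{n,k}(p)`. Summing `(j+1) q b_{j+1} = (n-j) p b_j` over `j ≥ k`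
telescopes to `∑ᵢ i b_{k+i} = k q b_k - (k - pn) B̄`, while log-concavity of `j ↦ b_j`
(`b_{k+i+j} b_k ≤ b_{k+i} b_{k+j}`) bounds the same sum by `(B̄ - b_n)(B̄ - b_k) / b_k`.
Together they give `S² ≥ (pn - k + 1) S + qk`, i.e. `S ≥ L̄`, the positive root of this quadratic.

For `pn ≤ k` the terms `b_j`, `j ≥ k`, decrease, and from `k + a` on they are dominated by a
geometric series of ratio `b_{k+a+1} / b_{k+a}`; this gives `S ≤ V̄(n,k,p,a)` for every `a`. For
`a = ⌈L̄ - 1⌉` the quadratic equation of `L̄` gives `V̄(n,k,p,a) ≤ a + L̄ < 2 L̄`.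
-/

open Finset Filter

section Lbar

variable {n k p x : ℝ}

theorem Lbar_sq (hqk : 0 ≤ (1 - p) * k) :
    Lbar n k p ^ 2 = (p * n - k + 1) * Lbar n k p + (1 - p) * k := by
  rw [Lbar]
  linear_combination Real.sq_sqrt
    (by nlinarith : 0 ≤ (p * n - k + 1) ^ 2 + 4 * (1 - p) * k) / 4

theorem sub_add_one_lt_Lbar (hqk : 0 < (1 - p) * k) : p * n - k + 1 < Lbar n k p := by
  have := Real.lt_sqrt_of_sq_lt
    (by linarith : (p * n - k + 1) ^ 2 < (p * n - k + 1) ^ 2 + 4 * (1 - p) * k)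
  rw [Lbar]
  linarith

theorem sq_sub_eq_sub_Lbar_mul (hqk : 0 ≤ (1 - p) * k) (x : ℝ) :
    x ^ 2 - ((p * n - k + 1) * x + (1 - p) * k)
      = (x - Lbar n k p) * (x + Lbar n k p - (p * n - k + 1)) := by
  linear_combination Lbar_sq (n := n) hqk

theorem Lbar_le_iff (hqk : 0 < (1 - p) * k) (hx : 0 ≤ x) :
    Lbar n k p ≤ x ↔ (p * n - k + 1) * x + (1 - p) * k ≤ x ^ 2 := by
  have hpos : 0 < x + Lbar n k p - (p * n - k + 1) := by
    linarith [sub_add_one_lt_Lbar (n := n) hqk]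
  rw [← sub_nonneg, ← sub_nonneg (a := x ^ 2), sq_sub_eq_sub_Lbar_mul hqk.le,
    mul_nonneg_iff_of_pos_right hpos]

theorem Lbar_lt_iff (hqk : 0 < (1 - p) * k) (hx : 0 ≤ x) :
    Lbar n k p < x ↔ (p * n - k + 1) * x + (1 - p) * k < x ^ 2 := by
  have hpos : 0 < x + Lbar n k p - (p * n - k + 1) := by
    linarith [sub_add_one_lt_Lbar (n := n) hqk]
  rw [← sub_pos, ← sub_pos (a := x ^ 2), sq_sub_eq_sub_Lbar_mul hqk.le,
    mul_pos_iff_of_pos_right hpos]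

theorem one_le_Lbar (hp0 : 0 ≤ p) (hqk : 0 < (1 - p) * k) (hkn : k ≤ n) : 1 ≤ Lbar n k p :=
  not_lt.1 fun h => by
    have := (Lbar_lt_iff hqk zero_le_one).1 h
    nlinarith

theorem one_lt_Lbar (hp0 : 0 < p) (hqk : 0 < (1 - p) * k) (hkn : k < n) : 1 < Lbar n k p :=
  not_le.1 fun h => by
    have := (Lbar_le_iff hqk zero_le_one).1 h
    nlinarith

end Lbar

section Ubar

variable {n k p : ℝ}

theorem Vbar_eq (n k p a : ℝ) :
    Vbar n k p a = a + (1 - p) * (k + a + 1) / (k + a + 1 - p * (n + 1)) := by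
  rw [Vbar, V]
  ring

theorem lt_Vbar (hp1 : p < 1) (hk : 0 ≤ k) (hpk : p * n ≤ k) {a : ℝ} (ha : 0 ≤ a) :
    a < Vbar n k p a := by
  have := sub_pos.2 hp1
  have hD : 0 < k + a + 1 - p * (n + 1) := by linarith
  rw [Vbar_eq, lt_add_iff_pos_right]
  positivity

theorem Ubar_le_Vbar (hp1 : p < 1) (hk : 0 ≤ k) (hpk : p * n ≤ k) (a : ℕ) :
    Ubar n k p ≤ Vbar n k p a :=
  ciInf_le ⟨0, Set.forall_mem_range.2 fun a =>
    (Nat.cast_nonneg a).trans (lt_Vbar hp1 hk hpk (Nat.cast_nonneg a)).le⟩ a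

theorem exists_Ubar_eq_Vbar (hp1 : p < 1) (hk : 0 ≤ k) (hpk : p * n ≤ k) :
    ∃ a : ℕ, Ubar n k p = Vbar n k p a := by
  have htendsto : Tendsto (fun a : ℕ => Vbar n k p a) cofinite atTop := by
    rw [Nat.cofinite_eq_atTop]
    exact tendsto_atTop_mono (fun a => (lt_Vbar hp1 hk hpk (Nat.cast_nonneg a)).le)
      tendsto_natCast_atTop_atTop
  obtain ⟨a₀, ha₀⟩ := htendsto.exists_forall_le
  exact ⟨a₀, (Ubar_le_Vbar hp1 hk hpk a₀).antisymm (le_ciInf ha₀)⟩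

theorem Vbar_le_add_Lbar (hp0 : 0 ≤ p) (hp1 : p < 1) (hk : 0 < k) (hkn : k ≤ n)
    (hpk : p * n ≤ k) {a : ℝ} (ha : Lbar n k p - 1 ≤ a) :
    Vbar n k p a ≤ a + Lbar n k p := by
  have hqk : 0 < (1 - p) * k := mul_pos (sub_pos.2 hp1) hk
  have hL := one_le_Lbar hp0 hqk hkn
  rw [Vbar_eq, add_le_add_iff_left, div_le_iff₀ (by linarith)]
  -- by `Lbar_sq`, the gap between the two sides is `(L̄ - q) (a - (L̄ - 1))`
  nlinarith [Lbar_sq (n := n) hqk.le, mul_nonneg (by linarith : 0 ≤ Lbar n k p - (1 - p))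
    (by linarith : 0 ≤ a - (Lbar n k p - 1))]

theorem Ubar_lt_two_mul_Lbar (hp0 : 0 ≤ p) (hp1 : p < 1) (hk : 0 < k) (hkn : k ≤ n)
    (hpk : p * n ≤ k) : Ubar n k p < 2 * Lbar n k p := by
  have hL := one_le_Lbar hp0 (mul_pos (sub_pos.2 hp1) hk) hkn
  calc Ubar n k p ≤ Vbar n k p ⌈Lbar n k p - 1⌉₊ := Ubar_le_Vbar hp1 hk.le hpk _
    _ ≤ ⌈Lbar n k p - 1⌉₊ + Lbar n k p :=
        Vbar_le_add_Lbar hp0 hp1 hk hkn hpk (Nat.le_ceil _)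
    _ < 2 * Lbar n k p := by linarith [Nat.ceil_lt_add_one (sub_nonneg.2 hL)]

theorem Vbar_zero_lt (hp0 : 0 < p) (hp1 : p < 1) (hn : 0 < n) (hpk : p < k / n)
    (hkn : k / n < 1) : Vbar n k p 0 < k / n * (1 - p) / (k / n - p) := by
  obtain ⟨f, rfl⟩ : ∃ f, k = f * n := ⟨k / n, (div_mul_cancel₀ k hn.ne').symm⟩
  rw [mul_div_cancel_right₀ f hn.ne'] at hpk hkn ⊢
  have := sub_pos.2 hp1
  rw [Vbar_eq, zero_add, add_zero, div_lt_div_iff₀ (by nlinarith) (sub_pos.2 hpk)]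
  nlinarith [mul_pos (mul_pos hp0 this) (sub_pos.2 hkn)]

end Ubar

section Sequences

variable {c : ℕ → ℝ}

theorem apply_add_mul_apply_zero_le {ρ : ℕ → ℝ} (hc : ∀ i, 0 ≤ c i)
    (hρ : ∀ i, 0 ≤ ρ i) (hρ_anti : Antitone ρ) (hsucc : ∀ i, c (i + 1) = ρ i * c i)
    (i j : ℕ) :
    c (i + j) * c 0 ≤ c i * c j := by
  induction i with
  | zero => rw [zero_add, mul_comm]
  | succ i ih =>
    rw [Nat.add_right_comm, hsucc, hsucc, mul_assoc, mul_assoc]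
    exact mul_le_mul (hρ_anti (Nat.le_add_right i j)) ih
      (mul_nonneg (hc _) (hc 0)) (hρ i)

theorem sum_mul_mul_le_sum_mul_sum (hc : ∀ i, 0 ≤ c i)
    (hsub : ∀ i j, c (i + j) * c 0 ≤ c i * c j) (m : ℕ) :
    (∑ t ∈ range (m + 1), (t : ℝ) * c t) * c 0
      ≤ (∑ i ∈ range m, c i) * ∑ j ∈ range m, c (j + 1) := by
  calc (∑ t ∈ range (m + 1), (t : ℝ) * c t) * c 0
      = ∑ t ∈ range (m + 1), ∑ _j ∈ range t, c t * c 0 := by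
        simp only [sum_mul, sum_const, card_range, nsmul_eq_mul, mul_assoc]
    _ ≤ ∑ t ∈ range (m + 1), ∑ j ∈ range t, c (t - (j + 1)) * c (j + 1) := by
        refine sum_le_sum fun t _ => sum_le_sum fun j hj => ?_
        simpa [Nat.sub_add_cancel (mem_range.1 hj)] using hsub (t - (j + 1)) (j + 1)
    _ = ∑ j ∈ range m, ∑ t ∈ Ico (j + 1) (m + 1), c (t - (j + 1)) * c (j + 1) :=
        sum_comm' fun t j => by simp only [mem_range, mem_Ico]; omega
    _ = ∑ j ∈ range m, (∑ i ∈ range (m - j), c i) * c (j + 1) := by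
        refine sum_congr rfl fun j hj => ?_
        rw [sum_Ico_eq_sum_range, sum_mul, Nat.add_sub_add_right]
        simp only [add_tsub_cancel_left]
    _ ≤ ∑ j ∈ range m, (∑ i ∈ range m, c i) * c (j + 1) := by
        gcongr with j
        · exact hc _
        · exact fun i _ _ => hc i
        · exact Nat.sub_le m j
    _ = (∑ i ∈ range m, c i) * ∑ j ∈ range m, c (j + 1) := by rw [mul_sum]

end Sequences

section Binomial

variable {n : ℕ} {p : ℝ}

theorem b_nonneg (hp0 : 0 ≤ p) (hp1 : p ≤ 1) (j : ℕ) : 0 ≤ b n j p := by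
  have := sub_nonneg.2 hp1
  unfold b; positivity

theorem b_pos (hp0 : 0 < p) (hp1 : p < 1) {j : ℕ} (hj : j ≤ n) : 0 < b n j p := by
  have := sub_pos.2 hp1
  have : 0 < n.choose j := Nat.choose_pos hj
  unfold b; positivity

theorem b_eq_zero_of_lt {j : ℕ} (hj : n < j) : b n j p = 0 := by
  simp [b, Nat.choose_eq_zero_of_lt hj]

theorem succ_mul_b_succ (m : ℕ) :
    (m + 1) * (1 - p) * b n (m + 1) p = (n - m : ℕ) * p * b n m p := by
  rcases lt_or_ge m n with hmn | hnm
  · obtain ⟨t, rfl⟩ := Nat.exists_eq_add_of_lt hmn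
    have hsub : m + t + 1 - m = t + 1 := by omega
    have hchoose : ((m + t + 1).choose (m + 1) : ℝ) * (m + 1)
        = (m + t + 1).choose m * (t + 1) := by
      exact_mod_cast hsub ▸ Nat.choose_succ_right_eq (m + t + 1) m
    rw [b, b, hsub, show m + t + 1 - (m + 1) = t by omega]
    push_cast
    linear_combination p ^ (m + 1) * (1 - p) ^ (t + 1) * hchoose
  · simp [b, Nat.choose_eq_zero_of_lt (Nat.lt_succ_of_le hnm), Nat.sub_eq_zero_of_le hnm]

/-- The ratio `b_{m+1} / b_m`; the truncated subtraction makes it vanish for `m ≥ n`, so that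
`b_succ` holds for every `m`. -/
noncomputable def binomRatio (n : ℕ) (p : ℝ) (m : ℕ) : ℝ :=
  (n - m : ℕ) * p / ((m + 1) * (1 - p))

theorem b_succ (hp1 : p < 1) (m : ℕ) : b n (m + 1) p = binomRatio n p m * b n m p := by
  have : (m + 1) * (1 - p) ≠ 0 := by have := sub_pos.2 hp1; positivity
  rw [binomRatio, div_mul_eq_mul_div, eq_div_iff this, ← succ_mul_b_succ]
  ring

theorem binomRatio_nonneg (hp0 : 0 ≤ p) (hp1 : p < 1) (m : ℕ) : 0 ≤ binomRatio n p m := by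
  have := sub_pos.2 hp1
  unfold binomRatio; positivity

theorem binomRatio_antitone (hp0 : 0 ≤ p) (hp1 : p < 1) : Antitone (binomRatio n p) := by
  intro i j hij
  have := sub_pos.2 hp1
  have hnum : ((n - j : ℕ) : ℝ) ≤ (n - i : ℕ) := by exact_mod_cast Nat.sub_le_sub_left hij n
  have hden : (i + 1 : ℝ) ≤ j + 1 := by exact_mod_cast Nat.succ_le_succ hij
  exact div_le_div₀ (by positivity) (mul_le_mul_of_nonneg_right hnum hp0) (by positivity)
    (mul_le_mul_of_nonneg_right hden this.le)

theorem binomRatio_lt_one (hp1 : p < 1) {m : ℕ} (hm : p * (n + 1) < m + 1) :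
    binomRatio n p m < 1 := by
  have := sub_pos.2 hp1
  rw [binomRatio, div_lt_one (by positivity)]
  rcases le_total m n with hmn | hnm
  · rw [Nat.cast_sub hmn]; linarith
  · rw [Nat.sub_eq_zero_of_le hnm]; simp; positivity

theorem binomRatio_pos (hp0 : 0 < p) (hp1 : p < 1) {m : ℕ} (hm : m < n) :
    0 < binomRatio n p m := by
  have := sub_pos.2 hp1
  have : 0 < n - m := Nat.sub_pos_of_lt hm
  unfold binomRatio; positivity

theorem binomRatio_self : binomRatio n p n = 0 := by simp [binomRatio]

theorem b_succ_lt (hp0 : 0 < p) (hp1 : p < 1) {m : ℕ} (hpm : p * n ≤ m) (hmn : m ≤ n) :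
    b n (m + 1) p < b n m p := by
  rw [b_succ hp1]
  exact mul_lt_of_lt_one_left (b_pos hp0 hp1 hmn) (binomRatio_lt_one hp1 (by linarith))

theorem b_succ_le (hp0 : 0 < p) (hp1 : p < 1) {m : ℕ} (hpm : p * n ≤ m) :
    b n (m + 1) p ≤ b n m p := by
  rcases le_or_gt m n with hmn | hnm
  · exact (b_succ_lt hp0 hp1 hpm hmn).le
  · rw [b_eq_zero_of_lt hnm, b_eq_zero_of_lt (by omega)]

theorem b_le_of_le (hp0 : 0 < p) (hp1 : p < 1) {i j : ℕ} (hpi : p * n ≤ i) (hij : i ≤ j) :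
    b n j p ≤ b n i p := by
  induction j, hij using Nat.le_induction with
  | base => rfl
  | succ j hij ih =>
    exact (b_succ_le hp0 hp1 (hpi.trans (by exact_mod_cast hij))).trans ih

theorem b_lt_of_lt (hp0 : 0 < p) (hp1 : p < 1) {i j : ℕ} (hpi : p * n ≤ i) (hin : i ≤ n)
    (hij : i < j) : b n j p < b n i p :=
  (b_le_of_le hp0 hp1 (hpi.trans (by simp)) hij).trans_lt (b_succ_lt hp0 hp1 hpi hin)

theorem Bbar_eq_sum_Ico {N : ℕ} (hN : n < N) (k : ℕ) :
    Bbar n k p = ∑ j ∈ Ico k N, b n j p :=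
  sum_subset (fun j hj => by simp only [mem_Icc, mem_Ico] at hj ⊢; omega)
    fun j hj hj' => b_eq_zero_of_lt (by simp only [mem_Icc, mem_Ico] at hj hj'; omega)

theorem Bbar_eq_sum_range {k : ℕ} (hkn : k ≤ n) :
    Bbar n k p = ∑ i ∈ range (n - k + 1), b n (k + i) p := by
  rw [Bbar_eq_sum_Ico (Nat.lt_succ_self n), sum_Ico_eq_sum_range, Nat.succ_sub hkn]

theorem Bbar_eq_sum_Ico_add (k a : ℕ) :
    Bbar n k p = ∑ j ∈ Ico k (k + a), b n j p + Bbar n (k + a) p := by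
  have hN : n < n + 1 + k + a := by omega
  rw [Bbar_eq_sum_Ico hN k, Bbar_eq_sum_Ico hN (k + a),
    sum_Ico_consecutive _ (Nat.le_add_right k a) (by omega)]

theorem Bbar_eq_add_Bbar_succ (k : ℕ) : Bbar n k p = b n k p + Bbar n (k + 1) p := by
  rw [Bbar_eq_sum_Ico_add k 1, Nat.Ico_succ_singleton, sum_singleton]

theorem b_le_Bbar (hp0 : 0 ≤ p) (hp1 : p ≤ 1) (k : ℕ) : b n k p ≤ Bbar n k p := by
  rw [Bbar_eq_add_Bbar_succ k, le_add_iff_nonneg_right]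
  exact sum_nonneg fun j _ => b_nonneg hp0 hp1 j

theorem Bbar_le_add_Bbar (hp0 : 0 < p) (hp1 : p < 1) {k : ℕ} (hpk : p * n ≤ k) (a : ℕ) :
    Bbar n k p ≤ a * b n k p + Bbar n (k + a) p := by
  rw [Bbar_eq_sum_Ico_add k a]
  gcongr
  simpa using sum_le_card_nsmul (Ico k (k + a)) (fun j => b n j p) (b n k p) fun j hj =>
    b_le_of_le hp0 hp1 hpk (mem_Ico.1 hj).1

theorem Bbar_succ_eq_sum (hp1 : p < 1) (s : ℕ) :
    Bbar n (s + 1) p = ∑ j ∈ Ico s (n + 1), binomRatio n p j * b n j p := by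
  rw [Bbar_eq_sum_Ico (N := n + 1 + 1) (by omega), ← sum_Ico_add']
  exact sum_congr rfl fun j _ => b_succ hp1 j

theorem Bbar_succ_le (hp0 : 0 ≤ p) (hp1 : p < 1) (s : ℕ) :
    Bbar n (s + 1) p ≤ binomRatio n p s * Bbar n s p := by
  rw [Bbar_succ_eq_sum hp1, Bbar_eq_sum_Ico (Nat.lt_succ_self n), mul_sum]
  exact sum_le_sum fun j hj => mul_le_mul_of_nonneg_right
    (binomRatio_antitone hp0 hp1 (mem_Ico.1 hj).1) (b_nonneg hp0 hp1.le j)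

theorem Bbar_succ_lt (hp0 : 0 < p) (hp1 : p < 1) {s : ℕ} (hsn : s < n) :
    Bbar n (s + 1) p < binomRatio n p s * Bbar n s p := by
  rw [Bbar_succ_eq_sum hp1, Bbar_eq_sum_Ico (Nat.lt_succ_self n), mul_sum]
  refine sum_lt_sum (fun j hj => mul_le_mul_of_nonneg_right
    (binomRatio_antitone hp0.le hp1 (mem_Ico.1 hj).1) (b_nonneg hp0.le hp1.le j))
    ⟨n, mem_Ico.2 ⟨hsn.le, Nat.lt_succ_self n⟩, ?_⟩
  rw [binomRatio_self, zero_mul]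
  exact mul_pos (binomRatio_pos hp0 hp1 hsn) (b_pos hp0 hp1 le_rfl)

theorem one_sub_binomRatio (hp1 : p < 1) {s : ℕ} (hsn : s ≤ n) :
    1 - binomRatio n p s = (s + 1 - p * (n + 1)) / ((s + 1) * (1 - p)) := by
  have := sub_pos.2 hp1
  rw [binomRatio, Nat.cast_sub hsn]
  field_simp
  ring

theorem Bbar_le_mul_b (hp0 : 0 < p) (hp1 : p < 1) {s : ℕ} (hs : p * (n + 1) < s + 1) :
    Bbar n s p ≤ (1 - p) * (s + 1) / (s + 1 - p * (n + 1)) * b n s p := by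
  rcases le_or_gt s n with hsn | hns
  · have key : (1 - binomRatio n p s) * Bbar n s p ≤ b n s p := by
      linarith [Bbar_eq_add_Bbar_succ (n := n) (p := p) s, Bbar_succ_le (n := n) hp0.le hp1 s]
    have := sub_pos.2 hp1
    rw [one_sub_binomRatio hp1 hsn, div_mul_eq_mul_div, div_le_iff₀ (by positivity)] at key
    rw [div_mul_eq_mul_div, le_div_iff₀ (by linarith)]
    linarith
  · rw [b_eq_zero_of_lt hns, Bbar, Icc_eq_empty (by omega), sum_empty, mul_zero]

theorem Bbar_lt_mul_b (hp0 : 0 < p) (hp1 : p < 1) {s : ℕ} (hs : p * (n + 1) < s + 1)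
    (hsn : s < n) :
    Bbar n s p < (1 - p) * (s + 1) / (s + 1 - p * (n + 1)) * b n s p := by
  have key : (1 - binomRatio n p s) * Bbar n s p < b n s p := by
    linarith [Bbar_eq_add_Bbar_succ (n := n) (p := p) s, Bbar_succ_lt hp0 hp1 hsn]
  have := sub_pos.2 hp1
  rw [one_sub_binomRatio hp1 hsn.le, div_mul_eq_mul_div, div_lt_iff₀ (by positivity)] at key
  rw [div_mul_eq_mul_div, lt_div_iff₀ (by linarith)]
  linarith

theorem sum_mul_b_add_mul_Bbar {k : ℕ} (hkn : k ≤ n) :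
    ∑ i ∈ range (n - k + 1), (i : ℝ) * b n (k + i) p + (k - p * n) * Bbar n k p
      = k * (1 - p) * b n k p := by
  set d : ℕ → ℝ := fun j => j * (1 - p) * b n j p
  have hstep : ∀ j ≤ n, ((j : ℝ) - p * n) * b n j p = d j - d (j + 1) := by
    intro j hj
    simp only [d]
    push_cast
    rw [succ_mul_b_succ, Nat.cast_sub hj]
    ring
  rw [Bbar_eq_sum_range hkn, mul_sum, ← sum_add_distrib]
  calc ∑ i ∈ range (n - k + 1), ((i : ℝ) * b n (k + i) p + (k - p * n) * b n (k + i) p)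
      = ∑ i ∈ range (n - k + 1), (d (k + i) - d (k + (i + 1))) :=
        sum_congr rfl fun i hi => by
          rw [← add_assoc, ← hstep _ (by simp only [mem_range] at hi; omega)]
          push_cast
          ring
    _ = d k - d (n + 1) := by
        rw [sum_range_sub' (fun i => d (k + i)), add_zero, show k + (n - k + 1) = n + 1 by omega]
    _ = k * (1 - p) * b n k p := by simp [d, b_eq_zero_of_lt (Nat.lt_succ_self n)]

theorem Bbar_div_b_quadratic (hp0 : 0 < p) (hp1 : p < 1) {k : ℕ} (hkn : k ≤ n) :
    (p * n - k + 1) * (Bbar n k p / b n k p) + (1 - p) * k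
        + b n n p / b n k p * (Bbar n k p / b n k p - 1)
      ≤ (Bbar n k p / b n k p) ^ 2 := by
  have hbk := b_pos hp0 hp1 hkn
  set c : ℕ → ℝ := fun i => b n (k + i) p / b n k p
  have hc : ∀ i, 0 ≤ c i := fun i => div_nonneg (b_nonneg hp0.le hp1.le _) hbk.le
  have hc0 : c 0 = 1 := div_self hbk.ne'
  have hsub := apply_add_mul_apply_zero_le hc (ρ := fun i => binomRatio n p (k + i))
    (fun i => binomRatio_nonneg hp0.le hp1 _)
    (fun i j hij => binomRatio_antitone hp0.le hp1 (Nat.add_le_add_left hij k))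
    (fun i => by simp only [c]; rw [← add_assoc, b_succ hp1, mul_div_assoc])
  have hpair := sum_mul_mul_le_sum_mul_sum hc hsub (n - k)
  have hS : Bbar n k p / b n k p = ∑ i ∈ range (n - k + 1), c i := by
    rw [Bbar_eq_sum_range hkn, sum_div]
  have hmean : ∑ i ∈ range (n - k + 1), (i : ℝ) * c i
      = k * (1 - p) - (k - p * n) * (Bbar n k p / b n k p) := by
    simp only [c, ← mul_div_assoc, ← sum_div]
    rw [eq_sub_iff_add_eq, ← add_div, sum_mul_b_add_mul_Bbar hkn,
      mul_div_cancel_right₀ _ hbk.ne']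
  have hlast : ∑ i ∈ range (n - k), c i = Bbar n k p / b n k p - b n n p / b n k p := by
    rw [hS, sum_range_succ]
    simp only [c, Nat.add_sub_cancel' hkn, add_sub_cancel_right]
  have hshift : ∑ i ∈ range (n - k), c (i + 1) = Bbar n k p / b n k p - 1 := by
    rw [hS, sum_range_succ', hc0, add_sub_cancel_right]
  rw [hmean, hlast, hshift, hc0, mul_one] at hpair
  linear_combination hpair

theorem one_le_Bbar_div_b (hp0 : 0 < p) (hp1 : p < 1) {k : ℕ} (hkn : k ≤ n) :
    1 ≤ Bbar n k p / b n k p :=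
  (one_le_div (b_pos hp0 hp1 hkn)).2 (b_le_Bbar hp0.le hp1.le k)

theorem one_lt_Bbar_div_b (hp0 : 0 < p) (hp1 : p < 1) {k : ℕ} (hkn : k < n) :
    1 < Bbar n k p / b n k p := by
  rw [one_lt_div (b_pos hp0 hp1 hkn.le), Bbar_eq_add_Bbar_succ k, lt_add_iff_pos_right]
  exact (b_pos hp0 hp1 hkn).trans_le (b_le_Bbar hp0.le hp1.le (k + 1))

theorem Lbar_le_Bbar_div_b (hp0 : 0 < p) (hp1 : p < 1) {k : ℕ} (hk : 0 < k) (hkn : k ≤ n) :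
    Lbar n k p ≤ Bbar n k p / b n k p := by
  have hS := one_le_Bbar_div_b hp0 hp1 hkn
  rw [Lbar_le_iff (mul_pos (sub_pos.2 hp1) (by exact_mod_cast hk)) (by linarith)]
  have := mul_nonneg (div_nonneg (b_nonneg (n := n) hp0.le hp1.le n) (b_pos hp0 hp1 hkn).le)
    (sub_nonneg.2 hS)
  linarith [Bbar_div_b_quadratic hp0 hp1 hkn]

theorem Lbar_lt_Bbar_div_b (hp0 : 0 < p) (hp1 : p < 1) {k : ℕ} (hk : 0 < k) (hkn : k < n) :
    Lbar n k p < Bbar n k p / b n k p := by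
  have hS := one_lt_Bbar_div_b hp0 hp1 hkn
  rw [Lbar_lt_iff (mul_pos (sub_pos.2 hp1) (by exact_mod_cast hk)) (by linarith)]
  have := mul_pos (div_pos (b_pos (n := n) hp0 hp1 le_rfl) (b_pos hp0 hp1 hkn.le)) (sub_pos.2 hS)
  linarith [Bbar_div_b_quadratic hp0 hp1 hkn.le]

theorem Bbar_le_add_mul_b (hp0 : 0 < p) (hp1 : p < 1) {k : ℕ} (hpk : p * n ≤ k) (a : ℕ) :
    Bbar n k p
      ≤ a * b n k p + (1 - p) * (k + a + 1) / (k + a + 1 - p * (n + 1)) * b n (k + a) p := by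
  have hs : p * (n + 1) < ((k + a : ℕ) : ℝ) + 1 := by
    push_cast
    linarith [Nat.cast_nonneg (α := ℝ) a]
  have htail := Bbar_le_mul_b hp0 hp1 hs
  push_cast at htail
  linarith [Bbar_le_add_Bbar hp0 hp1 hpk a]

theorem Bbar_le_Vbar_mul (hp0 : 0 < p) (hp1 : p < 1) {k : ℕ} (hpk : p * n ≤ k) (a : ℕ) :
    Bbar n k p ≤ Vbar n k p a * b n k p := by
  have := sub_pos.2 hp1
  have hD : 0 < (k : ℝ) + a + 1 - p * (n + 1) := by linarith [Nat.cast_nonneg (α := ℝ) a]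
  rw [Vbar_eq, add_mul]
  refine (Bbar_le_add_mul_b hp0 hp1 hpk a).trans ?_
  gcongr
  exact b_le_of_le hp0 hp1 hpk (Nat.le_add_right k a)

theorem Bbar_lt_Vbar_mul (hp0 : 0 < p) (hp1 : p < 1) {k : ℕ} (hpk : p * n ≤ k) (hkn : k < n)
    (a : ℕ) : Bbar n k p < Vbar n k p a * b n k p := by
  have := sub_pos.2 hp1
  rcases Nat.eq_zero_or_pos a with rfl | ha
  · simpa [Vbar_eq] using Bbar_lt_mul_b hp0 hp1 (by linarith) hkn
  have hD : 0 < (k : ℝ) + a + 1 - p * (n + 1) := by linarith [Nat.cast_nonneg (α := ℝ) a]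
  rw [Vbar_eq, add_mul]
  refine (Bbar_le_add_mul_b hp0 hp1 hpk a).trans_lt ?_
  gcongr
  exact b_lt_of_lt hp0 hp1 hpk hkn.le (Nat.lt_add_of_pos_right ha)

theorem Bbar_div_b_le_Ubar (hp0 : 0 < p) (hp1 : p < 1) {k : ℕ} (hpk : p * n ≤ k)
    (hkn : k ≤ n) :
    Bbar n k p / b n k p ≤ Ubar n k p :=
  le_ciInf fun a => (div_le_iff₀ (b_pos hp0 hp1 hkn)).2 (Bbar_le_Vbar_mul hp0 hp1 hpk a)

theorem Bbar_div_b_lt_Ubar (hp0 : 0 < p) (hp1 : p < 1) {k : ℕ} (hpk : p * n ≤ k)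
    (hkn : k < n) :
    Bbar n k p / b n k p < Ubar n k p := by
  obtain ⟨a, ha⟩ := exists_Ubar_eq_Vbar hp1 (Nat.cast_nonneg k) hpk
  rw [ha, div_lt_iff₀ (b_pos hp0 hp1 hkn.le)]
  exact Bbar_lt_Vbar_mul hp0 hp1 hpk hkn a

end Binomial

theorem upper_tail_ratio_bounds_general
    (k n : ℕ) (hk : 0 < k) (hkn : k ≤ n)
    (p : ℝ) (hp0 : 0 < p) (hp1 : p < 1) (hpk : p * n ≤ (k : ℝ)) :
    (1 ≤ Lbar n k p ∧ Lbar n k p ≤ Bbar n k p / b n k p ∧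
      Bbar n k p / b n k p ≤ Ubar n k p ∧ Ubar n k p < 2 * Lbar n k p) ∧
    (k < n →
      (1 < Lbar n k p ∧ Lbar n k p < Bbar n k p / b n k p ∧
        Bbar n k p / b n k p < Ubar n k p ∧ Ubar n k p < 2 * Lbar n k p)) ∧
    (p < (k : ℝ) / n → (k : ℝ) / n < 1 →
      (1 < Lbar n k p ∧ Lbar n k p < Bbar n k p / b n k p ∧
        Bbar n k p / b n k p < Ubar n k p ∧ Ubar n k p ≤ Vbar n k p 0 ∧
        Vbar n k p 0 < ((k : ℝ) / n) * (1 - p) / ((k : ℝ) / n - p))) := by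
  have hk' : (0 : ℝ) < k := by exact_mod_cast hk
  have hkn' : (k : ℝ) ≤ n := by exact_mod_cast hkn
  have hqk : 0 < (1 - p) * k := mul_pos (sub_pos.2 hp1) hk'
  have hU := Ubar_lt_two_mul_Lbar hp0.le hp1 hk' hkn' hpk
  have strict : k < n → 1 < Lbar n k p ∧ Lbar n k p < Bbar n k p / b n k p ∧
      Bbar n k p / b n k p < Ubar n k p ∧ Ubar n k p < 2 * Lbar n k p := fun hlt =>
    ⟨one_lt_Lbar hp0 hqk (by exact_mod_cast hlt), Lbar_lt_Bbar_div_b hp0 hp1 hk hlt,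
      Bbar_div_b_lt_Ubar hp0 hp1 hpk hlt, hU⟩
  refine ⟨⟨one_le_Lbar hp0.le hqk hkn', Lbar_le_Bbar_div_b hp0 hp1 hk hkn,
    Bbar_div_b_le_Ubar hp0 hp1 hpk hkn, hU⟩, strict, fun hpf hf1 => ?_⟩
  have hn : (0 : ℝ) < n := hk'.trans_le hkn'
  have hlt : k < n := by exact_mod_cast (div_lt_one hn).1 hf1
  obtain ⟨h1, h2, h3, -⟩ := strict hlt
  exact ⟨h1, h2, h3, by simpa using Ubar_le_Vbar hp1 hk'.le hpk 0,
    Vbar_zero_lt hp0 hp1 hn hpf hf1⟩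

theorem upper_tail_ratio_bounds
    (k n : ℕ) (hk : 0 < k) (hn : 0 < n) (hkn : k ≤ n)
    (p : ℝ) (hp0 : 0 < p) (hp1 : p < 1) (hpk : p * n ≤ (k : ℝ)) :
    (1 ≤ Lbar n k p ∧ Lbar n k p ≤ Bbar n k p / b n k p ∧
      Bbar n k p / b n k p ≤ Ubar n k p ∧ Ubar n k p < 2 * Lbar n k p) ∧
    (k < n →
      (1 < Lbar n k p ∧ Lbar n k p < Bbar n k p / b n k p ∧
        Bbar n k p / b n k p < Ubar n k p ∧ Ubar n k p < 2 * Lbar n k p)) ∧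
    (p < (k : ℝ) / n → (k : ℝ) / n < 1 →
      (1 < Lbar n k p ∧ Lbar n k p < Bbar n k p / b n k p ∧
        Bbar n k p / b n k p < Ubar n k p ∧ Ubar n k p ≤ Vbar n k p 0 ∧
        Vbar n k p 0 < ((k : ℝ) / n) * (1 - p) / ((k : ℝ) / n - p))) :=
  upper_tail_ratio_bounds_general k n hk hkn p hp0 hp1 hpk
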